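/- arXiv:2202.03023 — 2 statements merged into one kernel-verified Lean document; each statement's English description precedes it below -/
import Mathlib

section
/- Let b be a real number with 0 < b, let n, f, m be natural numbers with m < 2^n. Then b^(−m / 2^f) = ∏_{j=0}^{n-1} c_j, where c_j = (b⁻¹)^(2^j / 2^f) if the j-th bit of m is 1 and c_j = 1 otherwise. Here all exponentiations with real exponents are real powers (rpow). -/
open Finset

theorem Nat.sum_range_ite_testBit_two_pow {m n : ℕ} (hm : m < 2 ^ n) :
    ∑ j ∈ range n, (if m.testBit j then 2 ^ j else 0) = m := by
  have hbits : (range n).filter (m.testBit ·) = m.bitIndices.toFinset := by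
    ext j
    simp only [mem_filter, mem_range, List.mem_toFinset, Nat.mem_bitIndices, and_iff_right_iff_imp]
    intro hj
    exact (Nat.pow_lt_pow_iff_right (by norm_num)).1 ((Nat.ge_two_pow_of_testBit hj).trans_lt hm)
  rw [← sum_filter, hbits, Finset.sum_toFinset_bitIndices_two_pow]

theorem Real.rpow_natCast_div_eq_prod_testBit {a : ℝ} (ha : 0 < a) (c : ℝ) {m n : ℕ}
    (hm : m < 2 ^ n) :
    a ^ ((m : ℝ) / c) = ∏ j ∈ range n, (if m.testBit j then a ^ ((2 ^ j : ℝ) / c) else 1) := by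
  have hm' : (m : ℝ) = ∑ j ∈ range n, (if m.testBit j then (2 : ℝ) ^ j else 0) := by
    exact_mod_cast (Nat.sum_range_ite_testBit_two_pow hm).symm
  rw [hm', sum_div, Real.rpow_sum_of_pos ha]
  refine prod_congr rfl fun j _ => ?_
  split_ifs <;> simp

/-- Correctness of EXP for negative fixed-point powers. -/
theorem exp_correct_neg (b : ℝ) (hb : 0 < b) (n f m : ℕ) (hm : m < 2 ^ n) :
    b ^ (-(m : ℝ) / 2 ^ f) =
      ∏ j ∈ Finset.range n,
        (if Nat.testBit m j then b⁻¹ ^ ((2 ^ j : ℝ) / 2 ^ f) else 1) := by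
  rw [neg_div, Real.rpow_neg hb.le, ← Real.inv_rpow hb.le]
  exact Real.rpow_natCast_div_eq_prod_testBit (inv_pos.mpr hb) _ hm
end

section
/- Let m be an integer and b a real number with 0 < b, and let n ≥ 1 and f be natural numbers with |m| < 2^(n−1). Then b^(m / 2^f) = ∏_{j=0}^{n-2} c_j, where c_j = β^(2^j / 2^f) if the j-th bit of |m| is 1 and c_j = 1 otherwise, and where β = b if m ≥ 0 and β = b⁻¹ if m < 0. All exponentiations with real exponents are real powers (rpow). -/
open Finset

theorem Nat.sum_range_ite_testBit (k t : ℕ) :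
    ∑ j ∈ range t, (if k.testBit j then 2 ^ j else 0) = k % 2 ^ t := by
  induction t with
  | zero => simp [Nat.mod_one]
  | succ t ih =>
    rw [sum_range_succ, ih, Nat.mod_pow_succ, ← Nat.toNat_testBit]
    cases k.testBit t <;> simp

theorem Real.rpow_natCast_div_eq_prod_testBit_s3 {β : ℝ} (hβ : 0 < β) (c : ℝ) {k t : ℕ}
    (hk : k < 2 ^ t) :
    β ^ ((k : ℝ) / c) = ∏ j ∈ range t, if k.testBit j then β ^ ((2 ^ j : ℝ) / c) else 1 := by
  have hk_bits : (k : ℝ) = ∑ j ∈ range t, if k.testBit j then (2 : ℝ) ^ j else 0 := by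
    exact_mod_cast ((Nat.sum_range_ite_testBit k t).trans (Nat.mod_eq_of_lt hk)).symm
  rw [hk_bits, sum_div, Real.rpow_sum_of_pos hβ]
  refine prod_congr rfl fun j _ => ?_
  split_ifs <;> simp

theorem Real.rpow_intCast_div_eq_natAbs {b : ℝ} (hb : 0 ≤ b) (m : ℤ) (c : ℝ) :
    b ^ ((m : ℝ) / c) = (if 0 ≤ m then b else b⁻¹) ^ ((m.natAbs : ℝ) / c) := by
  rw [Nat.cast_natAbs]
  split_ifs with hm
  · rw [abs_of_nonneg hm]
  · rw [Real.inv_rpow hb, ← Real.rpow_neg hb, abs_of_neg (not_le.1 hm)]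
    push_cast
    ring_nf

theorem exp_correct_signed_general (m : ℤ) (b : ℝ) (hb : 0 < b) (n f : ℕ)
    (hm : m.natAbs < 2 ^ (n - 1)) :
    b ^ ((m : ℝ) / 2 ^ f) =
      ∏ j ∈ Finset.range (n - 1),
        (if Nat.testBit m.natAbs j then
            (if 0 ≤ m then b else b⁻¹) ^ ((2 ^ j : ℝ) / 2 ^ f)
          else 1) := by
  rw [Real.rpow_intCast_div_eq_natAbs hb.le]
  exact Real.rpow_natCast_div_eq_prod_testBit_s3 (by split_ifs <;> positivity) _ hm

/-- Full correctness of EXP for signed fixed-point powers. -/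
theorem exp_correct_signed (m : ℤ) (b : ℝ) (hb : 0 < b) (n f : ℕ) (hn : 1 ≤ n)
    (hm : m.natAbs < 2 ^ (n - 1)) :
    b ^ ((m : ℝ) / 2 ^ f) =
      ∏ j ∈ Finset.range (n - 1),
        (if Nat.testBit m.natAbs j then
            (if 0 ≤ m then b else b⁻¹) ^ ((2 ^ j : ℝ) / 2 ^ f)
          else 1) :=
  exp_correct_signed_general m b hb n f hm
end
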